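/- arXiv:math/0409126 — 6 statements merged into one kernel-verified Lean document; each statement's English description precedes it below -/
import Mathlib

section
/- Let B be an n×n matrix over the field of Puiseux series with all entries nonzero, let O be the matrix of tropicalizations o_{ij} = T(b_{ij}), and let A be the matrix of principal coefficients of the entries of B. If the pseudo-determinant Δ_O(A) is nonzero, then det(B) is nonzero, its principal coefficient Pc(det B) equals Δ_O(A), and T(det B) equals the tropical determinant |O|_t. -/
/-- Tropicalization map on the field of (generalized) Puiseux series
`HahnSeries ℝ ℂ`: `T x = - ord x`. -/
noncomputable def T (x : HahnSeries ℝ ℂ) : ℝ := -x.order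

/-- Principal coefficient: the coefficient of the lowest-order term. -/
noncomputable def Pc (x : HahnSeries ℝ ℂ) : ℂ := x.coeff x.order

/-- Tropical determinant of a real square matrix. -/
noncomputable def tropDet {n : ℕ} (O : Matrix (Fin n) (Fin n) ℝ) : ℝ :=
  Finset.univ.sup' Finset.univ_nonempty (fun σ : Equiv.Perm (Fin n) => ∑ i, O i (σ i))

/-- Pseudo-determinant of `A` with respect to the tropical matrix `O`. -/
noncomputable def pseudoDet {n : ℕ} {R : Type*} [CommRing R]
    (O : Matrix (Fin n) (Fin n) ℝ) (A : Matrix (Fin n) (Fin n) R) : R :=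
  ∑ σ ∈ Finset.univ.filter
      (fun σ : Equiv.Perm (Fin n) => ∑ i, O i (σ i) = tropDet O),
    (Equiv.Perm.sign σ : ℤ) • ∏ i, A i (σ i)

/-!
Write `det B = ∑_σ sgn σ ∏_i b_{i,σ(i)}`. Each term is nonzero of order `-∑_i o_{i,σ(i)} ≥ -|O|_t`
with leading coefficient `∏_i a_{i,σ(i)}`. So `det B` has no terms below `-|O|_t`, and its coefficient
there is the sum of the leading coefficients of the terms of exactly that order, which is `Δ_O(A)`.
When this is nonzero it is the leading coefficient of `det B`.
-/

open Finset

namespace HahnSeries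

variable {Γ R : Type*}

section LinearOrder

variable [LinearOrder Γ] [Zero Γ]

theorem coeff_eq_ite_of_le_order [Zero R] {x : R⟦Γ⟧} {g : Γ} (hg : g ≤ x.order) :
    x.coeff g = if x.order = g then x.leadingCoeff else 0 := by
  split_ifs with h
  · rw [leadingCoeff_eq, h]
  · exact coeff_eq_zero_of_lt_order (lt_of_le_of_ne hg (Ne.symm h))

variable [AddCommMonoid R] {ι S : Type*} [SMulZeroClass S R]

theorem coeff_sum_smul_of_le_order {s : Finset ι} {c : ι → S} {f : ι → R⟦Γ⟧} {g : Γ}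
    (hg : ∀ i ∈ s, g ≤ (f i).order) :
    (∑ i ∈ s, c i • f i).coeff g = ∑ i ∈ s with (f i).order = g, c i • (f i).leadingCoeff := by
  rw [coeff_sum, sum_filter]
  refine sum_congr rfl fun i hi => ?_
  rw [coeff_smul, coeff_eq_ite_of_le_order (hg i hi), smul_ite, smul_zero]

theorem order_sum_smul_eq {s : Finset ι} {c : ι → S} {f : ι → R⟦Γ⟧} {g : Γ}
    (hg : ∀ i ∈ s, g ≤ (f i).order)
    (hne : ∑ i ∈ s with (f i).order = g, c i • (f i).leadingCoeff ≠ 0) :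
    (∑ i ∈ s, c i • f i).order = g ∧
      (∑ i ∈ s, c i • f i).leadingCoeff =
        ∑ i ∈ s with (f i).order = g, c i • (f i).leadingCoeff := by
  have hcoeff := coeff_sum_smul_of_le_order (c := c) hg
  have hlow : ∀ j < g, (∑ i ∈ s, c i • f i).coeff j = 0 := fun j hj => by
    rw [coeff_sum_smul_of_le_order fun i hi => hj.le.trans (hg i hi),
      filter_false_of_mem fun i hi => (hj.trans_le (hg i hi)).ne', sum_empty]
  have horder : (∑ i ∈ s, c i • f i).order = g :=
    le_antisymm (order_le_of_coeff_ne_zero (hcoeff ▸ hne))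
      ((le_order_iff_forall (ne_zero_of_coeff_ne_zero (hcoeff ▸ hne))).2 hlow)
  exact ⟨horder, by rw [leadingCoeff_eq, horder, hcoeff]⟩

end LinearOrder

section Prod

variable [AddCommMonoid Γ] [LinearOrder Γ] [IsOrderedCancelAddMonoid Γ]
  [CommRing R] [NoZeroDivisors R] {ι : Type*}

theorem order_prod {s : Finset ι} {f : ι → R⟦Γ⟧} (hf : ∀ i ∈ s, f i ≠ 0) :
    (∏ i ∈ s, f i).order = ∑ i ∈ s, (f i).order := by
  induction s using Finset.cons_induction with
  | empty => simp
  | cons a s ha ih =>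
    have hs : ∀ i ∈ s, f i ≠ 0 := fun i hi => hf i (mem_cons_of_mem hi)
    have : Nontrivial R⟦Γ⟧ := nontrivial_of_ne _ _ (hf a (mem_cons_self a s))
    rw [prod_cons, sum_cons, order_mul (hf a (mem_cons_self a s)) (prod_ne_zero_iff.2 hs), ih hs]

theorem leadingCoeff_prod (s : Finset ι) (f : ι → R⟦Γ⟧) :
    (∏ i ∈ s, f i).leadingCoeff = ∏ i ∈ s, (f i).leadingCoeff :=
  map_prod (⟨⟨leadingCoeff, leadingCoeff_one⟩, fun x y => leadingCoeff_mul x y⟩ : R⟦Γ⟧ →* R) f s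

end Prod

end HahnSeries

theorem Pc_eq_leadingCoeff (x : HahnSeries ℝ ℂ) : Pc x = x.leadingCoeff :=
  HahnSeries.leadingCoeff_eq.symm

theorem sum_le_tropDet {n : ℕ} (O : Matrix (Fin n) (Fin n) ℝ) (σ : Equiv.Perm (Fin n)) :
    ∑ i, O i (σ i) ≤ tropDet O :=
  le_sup' (fun σ : Equiv.Perm (Fin n) => ∑ i, O i (σ i)) (mem_univ σ)

theorem Matrix.det_eq_sum_zsmul_prod {n R : Type*} [Fintype n] [DecidableEq n] [CommRing R]
    (M : Matrix n n R) :
    M.det = ∑ σ : Equiv.Perm n, (Equiv.Perm.sign σ : ℤ) • ∏ i, M i (σ i) := by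
  rw [← det_transpose, det_apply]
  simp only [Units.smul_def, transpose_apply]

theorem pseudoDet_det {n : ℕ} (B : Matrix (Fin n) (Fin n) (HahnSeries ℝ ℂ))
    (hB : ∀ i j, B i j ≠ 0)
    (O : Matrix (Fin n) (Fin n) ℝ) (hO : ∀ i j, O i j = T (B i j))
    (A : Matrix (Fin n) (Fin n) ℂ) (hA : ∀ i j, A i j = Pc (B i j))
    (hΔ : pseudoDet O A ≠ 0) :
    B.det ≠ 0 ∧ Pc B.det = pseudoDet O A ∧ T B.det = tropDet O := by
  classical
  have horder (σ : Equiv.Perm (Fin n)) : (∏ i, B i (σ i)).order = -∑ i, O i (σ i) := by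
    simp [HahnSeries.order_prod fun i _ => hB i (σ i), hO, T]
  have hlead (σ : Equiv.Perm (Fin n)) : (∏ i, B i (σ i)).leadingCoeff = ∏ i, A i (σ i) := by
    simp [HahnSeries.leadingCoeff_prod, hA, Pc_eq_leadingCoeff]
  have hterms : ∀ σ ∈ (univ : Finset (Equiv.Perm (Fin n))), -tropDet O ≤ (∏ i, B i (σ i)).order := fun σ _ => by
    simpa [horder] using sum_le_tropDet O σ
  have hleading : ∑ σ : Equiv.Perm (Fin n) with (∏ i, B i (σ i)).order = -tropDet O,
      (Equiv.Perm.sign σ : ℤ) • (∏ i, B i (σ i)).leadingCoeff = pseudoDet O A := by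
    simp only [horder, hlead, neg_inj, pseudoDet]
  obtain ⟨hdet_order, hdet_lead⟩ := HahnSeries.order_sum_smul_eq hterms (hleading ▸ hΔ)
  rw [← B.det_eq_sum_zsmul_prod] at hdet_order
  rw [← B.det_eq_sum_zsmul_prod, hleading] at hdet_lead
  refine ⟨?_, by rw [Pc_eq_leadingCoeff, hdet_lead], by rw [T, hdet_order, neg_neg]⟩
  exact HahnSeries.leadingCoeff_ne_zero.1 (hdet_lead ▸ hΔ)
end

section
/- No-cancellation lemma for pseudo-Cramer: Let F_1,…,F_n be families F_u = {f_u^1,…,f_u^{n+1}} of polynomials over ℂ such that (i) each family F_u consists of multihomogeneous polynomials of the same multidegree in its own sets of variables, (ii) distinct families involve disjoint sets of variables, and (iii) within each family, distinct polynomials f_u^l, f_u^m (l ≠ m) share no monomial. Form the n×(n+1) matrix A = (f_u^l) and fix any real n×(n+1) matrix O. Then each pseudo-Cramer coordinate S_l = Δ_{O^l}(A^l) is a nonzero polynomial, and for l ≠ m the polynomials S_l and S_m share no monomial. -/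
set_option maxHeartbeats 800000

section aux

open MvPolynomial

/-- Decompose a monomial in the support of a product. -/
lemma prod_support_decomp {σ R ι : Type*} [CommSemiring R] [DecidableEq σ] [DecidableEq ι]
    (s : Finset ι) (g : ι → MvPolynomial σ R) {mon : σ →₀ ℕ}
    (h : mon ∈ (∏ i ∈ s, g i).support) :
    ∃ m : ι → (σ →₀ ℕ), (∀ i ∈ s, m i ∈ (g i).support) ∧ mon = ∑ i ∈ s, m i := by
  induction s using Finset.cons_induction generalizing mon with
  | empty =>
    refine ⟨fun _ => 0, by simp, ?_⟩
    simp only [Finset.prod_empty, MvPolynomial.mem_support_iff, MvPolynomial.coeff_one] at h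
    by_contra hc
    simp only [Finset.sum_empty] at hc
    exact h (by simp [Ne.symm hc])
  | cons a s ha ih =>
    rw [Finset.prod_cons] at h
    have h2 := MvPolynomial.support_mul _ _ h
    rw [Finset.mem_add] at h2
    obtain ⟨m1, hm1, m2, hm2, hsum⟩ := h2
    obtain ⟨m, hm, rfl⟩ := ih hm2
    refine ⟨fun i => if i = a then m1 else m i, ?_, ?_⟩
    · intro i hi
      rcases Finset.mem_cons.1 hi with rfl | hi
      · simpa using hm1
      · have hia : i ≠ a := ne_of_mem_of_not_mem hi ha
        simpa [hia] using hm i hi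
    · rw [Finset.sum_cons, if_pos rfl, ← hsum]
      congr 1
      refine Finset.sum_congr rfl fun i hi => ?_
      have hia : i ≠ a := ne_of_mem_of_not_mem hi ha
      rw [if_neg hia]

end aux

theorem no_cancellation_pseudo_cramer {n N k : ℕ}
    (f : Fin n → Fin (n + 1) → MvPolynomial (Fin N) ℂ)
    -- the variable sets `C i`, pairwise disjoint
    (C : Fin k → Finset (Fin N))
    (hC : ∀ i j : Fin k, i ≠ j → Disjoint (C i) (C j))
    -- the indices of variable sets used by the family `F u`
    (fam : Fin n → Finset (Fin k))
    -- (ii) distinct families involve disjoint sets of variables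
    (hfam : ∀ u v : Fin n, u ≠ v → Disjoint (fam u) (fam v))
    (hvars : ∀ u l, (f u l).vars ⊆ (fam u).biUnion C)
    -- (i) each family is multihomogeneous of a common multidegree `d u`
    (d : Fin n → Fin k → ℕ)
    (hhom : ∀ u l, ∀ i ∈ fam u, ∀ mon ∈ (f u l).support,
      ∑ x ∈ C i, mon x = d u i)
    (hne : ∀ u l, f u l ≠ 0)
    -- (iii) within a family, distinct polynomials share no monomial
    (hsupp : ∀ u, ∀ l m : Fin (n + 1), l ≠ m →
      Disjoint (f u l).support (f u m).support)
    (O : Matrix (Fin n) (Fin (n + 1)) ℝ)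
    (S : Fin (n + 1) → MvPolynomial (Fin N) ℂ)
    (hS : ∀ l : Fin (n + 1), S l =
      pseudoDet (O.submatrix id l.succAbove)
        (Matrix.of (fun u j => f u (l.succAbove j)))) :
    (∀ l, S l ≠ 0) ∧
      ∀ l m : Fin (n + 1), l ≠ m → Disjoint (S l).support (S m).support := by
  classical
  -- variable set of family u
  set V : Fin n → Finset (Fin N) := fun u => (fam u).biUnion C with hV
  have hVdisj : ∀ u v : Fin n, u ≠ v → Disjoint (V u) (V v) := by
    intro u v huv
    rw [Finset.disjoint_left]
    intro x hxu hxv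
    obtain ⟨i, hi, hxi⟩ := Finset.mem_biUnion.1 hxu
    obtain ⟨j, hj, hxj⟩ := Finset.mem_biUnion.1 hxv
    have hij : i ≠ j := fun h => (Finset.disjoint_left.1 (hfam u v huv) hi) (h ▸ hj)
    exact (Finset.disjoint_left.1 (hC i j hij) hxi) hxj
  -- monomials of f u l vanish off V u
  have hmonV : ∀ u l, ∀ mon ∈ (f u l).support, ∀ x, x ∉ V u → mon x = 0 := by
    intro u l mon hmon x hx
    by_contra hc
    exact hx (hvars u l ((MvPolynomial.mem_vars x).2 ⟨mon, hmon, Finsupp.mem_support_iff.2 hc⟩))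
  -- key: a common monomial forces equal column choices
  have key : ∀ (c c' : Fin n → Fin (n + 1)) (mon : Fin N →₀ ℕ),
      mon ∈ (∏ u, f u (c u)).support → mon ∈ (∏ u, f u (c' u)).support →
      ∀ u, c u = c' u := by
    intro c c' mon h1 h2 u
    obtain ⟨m, hm, hsum⟩ := prod_support_decomp Finset.univ (fun u => f u (c u)) h1
    obtain ⟨m', hm', hsum'⟩ := prod_support_decomp Finset.univ (fun u => f u (c' u)) h2
    have hmm : m u = m' u := by
      ext x
      by_cases hx : x ∈ V u
      · have e1 : mon x = m u x := by
          rw [hsum, Finsupp.finset_sum_apply]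
          rw [Finset.sum_eq_single u]
          · intro v _ hvu
            exact hmonV v (c v) (m v) (hm v (Finset.mem_univ v)) x
              (Finset.disjoint_left.1 (hVdisj u v (Ne.symm hvu)) hx)
          · simp
        have e2 : mon x = m' u x := by
          rw [hsum', Finsupp.finset_sum_apply]
          rw [Finset.sum_eq_single u]
          · intro v _ hvu
            exact hmonV v (c' v) (m' v) (hm' v (Finset.mem_univ v)) x
              (Finset.disjoint_left.1 (hVdisj u v (Ne.symm hvu)) hx)
          · simp
        rw [← e1, ← e2]
      · rw [hmonV u (c u) (m u) (hm u (Finset.mem_univ u)) x hx,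
          hmonV u (c' u) (m' u) (hm' u (Finset.mem_univ u)) x hx]
    by_contra hcc
    exact (Finset.disjoint_left.1 (hsupp u (c u) (c' u) hcc)
      (hm u (Finset.mem_univ u))) (hmm ▸ hm' u (Finset.mem_univ u))
  -- products are nonzero
  have hPne : ∀ (c : Fin n → Fin (n + 1)), (∏ u, f u (c u)) ≠ 0 :=
    fun c => Finset.prod_ne_zero_iff.2 fun u _ => hne u (c u)
  -- a monomial of S l belongs to the support of a product along l.succAbove ∘ σ
  have hSmem : ∀ (l : Fin (n + 1)) (mon : Fin N →₀ ℕ), mon ∈ (S l).support →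
      ∃ σ : Equiv.Perm (Fin n), mon ∈ (∏ u, f u (l.succAbove (σ u))).support := by
    intro l mon hmon
    rw [hS l] at hmon
    unfold pseudoDet at hmon
    rw [MvPolynomial.mem_support_iff, MvPolynomial.coeff_sum] at hmon
    obtain ⟨σ, -, hσ⟩ := Finset.exists_ne_zero_of_sum_ne_zero hmon
    refine ⟨σ, ?_⟩
    rw [MvPolynomial.mem_support_iff]
    intro h0
    rw [MvPolynomial.coeff_smul] at hσ
    apply hσ
    simp only [Matrix.of_apply] at h0 ⊢
    rw [h0, smul_zero]
  constructor
  · -- S l ≠ 0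
    intro l
    -- pick a permutation achieving the tropical determinant
    obtain ⟨σ0, -, hσ0⟩ := Finset.exists_mem_eq_sup' (Finset.univ_nonempty)
      (fun σ : Equiv.Perm (Fin n) => ∑ i, (O.submatrix id l.succAbove) i (σ i))
    have hσ0' : σ0 ∈ Finset.univ.filter
        (fun σ : Equiv.Perm (Fin n) =>
          ∑ i, (O.submatrix id l.succAbove) i (σ i) = tropDet (O.submatrix id l.succAbove)) := by
      simp only [Finset.mem_filter, Finset.mem_univ, true_and]
      rw [tropDet, hσ0]
    obtain ⟨mon, hmon⟩ := (MvPolynomial.support_nonempty).2 (hPne (fun u => l.succAbove (σ0 u)))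
    intro hS0
    rw [hS l] at hS0
    unfold pseudoDet at hS0
    have : MvPolynomial.coeff mon (0 : MvPolynomial (Fin N) ℂ) ≠ 0 := by
      rw [← hS0, MvPolynomial.coeff_sum]
      rw [Finset.sum_eq_single σ0]
      · rw [MvPolynomial.coeff_smul]
        simp only [Matrix.of_apply]
        have := MvPolynomial.mem_support_iff.1 hmon
        intro hz
        rcases smul_eq_zero.1 hz with h1 | h1
        · rcases Int.units_eq_one_or (Equiv.Perm.sign σ0) with h2 | h2 <;>
            rw [h2] at h1 <;> simp at h1
        · exact this h1
      · intro τ hτ hτσ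
        rw [MvPolynomial.coeff_smul]
        have : mon ∉ (∏ u, f u (l.succAbove (τ u))).support := by
          intro hmem
          have hk := key (fun u => l.succAbove (τ u)) (fun u => l.succAbove (σ0 u)) mon hmem hmon
          exact hτσ (Equiv.ext fun u => Fin.succAbove_right_injective (hk u))
        simp only [Matrix.of_apply]
        rw [MvPolynomial.notMem_support_iff.1 this, smul_zero]
      · intro h
        exact absurd hσ0' h
    exact this (MvPolynomial.coeff_zero mon)
  · -- disjoint supports
    intro l m hlm
    rw [Finset.disjoint_left]
    intro mon hl hm
    obtain ⟨σ, hσ⟩ := hSmem l mon hl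
    obtain ⟨τ, hτ⟩ := hSmem m mon hm
    have hcc := key (fun u => l.succAbove (σ u)) (fun u => m.succAbove (τ u)) mon hσ hτ
    obtain ⟨j, hj⟩ := Fin.exists_succAbove_eq (Ne.symm hlm)
    have h2 : l.succAbove (σ (σ.symm j)) = m.succAbove (τ (σ.symm j)) := hcc (σ.symm j)
    rw [Equiv.apply_symm_apply, hj] at h2
    exact Fin.succAbove_ne m (τ (σ.symm j)) h2.symm
end

section
/- In the no-cancellation lemma setting, if σ and τ are distinct permutations appearing in the expansion of S_l (so σ(n+1) = τ(n+1) = l and both achieve the tropical determinant of O^l), then the products ∏_{u=1}^n (A^l)_{u}^{σ(u)} and ∏_{u=1}^n (A^l)_{u}^{τ(u)} have no monomial in common. -/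
lemma filter_mem_support_of_mul {N : ℕ} (p q : MvPolynomial (Fin N) ℂ) (S : Finset (Fin N))
    (hp : p.vars ⊆ S) (hq : Disjoint q.vars S) {m : Fin N →₀ ℕ}
    (hm : m ∈ (p * q).support) : m.filter (· ∈ S) ∈ p.support := by
  have hsub := MvPolynomial.support_mul p q hm
  rw [Finset.mem_add] at hsub
  obtain ⟨a, ha, b, hb, rfl⟩ := hsub
  have : (a + b).filter (· ∈ S) = a := by
    ext x
    rw [Finsupp.filter_apply]
    by_cases hx : x ∈ S
    · have hbx : b x = 0 := by
        by_contra h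
        have : x ∈ q.vars := (MvPolynomial.mem_vars x).2 ⟨b, hb, Finsupp.mem_support_iff.2 h⟩
        exact (Finset.disjoint_left.1 hq this) hx
      simp [hx, hbx]
    · have hax : a x = 0 := by
        by_contra h
        have : x ∈ p.vars := (MvPolynomial.mem_vars x).2 ⟨a, ha, Finsupp.mem_support_iff.2 h⟩
        exact hx (hp this)
      simp [hx, hax]
  rw [this]
  exact ha

theorem no_common_monomial_of_distinct_perms {n N k : ℕ}
    (f : Fin n → Fin (n + 1) → MvPolynomial (Fin N) ℂ)
    (C : Fin k → Finset (Fin N))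
    (hC : ∀ i j : Fin k, i ≠ j → Disjoint (C i) (C j))
    (fam : Fin n → Finset (Fin k))
    (hfam : ∀ u v : Fin n, u ≠ v → Disjoint (fam u) (fam v))
    (hvars : ∀ u l, (f u l).vars ⊆ (fam u).biUnion C)
    (d : Fin n → Fin k → ℕ)
    (hhom : ∀ u l, ∀ i ∈ fam u, ∀ mon ∈ (f u l).support,
      ∑ x ∈ C i, mon x = d u i)
    (hne : ∀ u l, f u l ≠ 0)
    (hsupp : ∀ u, ∀ l m : Fin (n + 1), l ≠ m →
      Disjoint (f u l).support (f u m).support)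
    (O : Matrix (Fin n) (Fin (n + 1)) ℝ)
    (l : Fin (n + 1)) (σ τ : Equiv.Perm (Fin n)) (hστ : σ ≠ τ)
    (hσ : ∑ u, (O.submatrix id l.succAbove) u (σ u) =
      tropDet (O.submatrix id l.succAbove))
    (hτ : ∑ u, (O.submatrix id l.succAbove) u (τ u) =
      tropDet (O.submatrix id l.succAbove)) :
    Disjoint (∏ u, f u (l.succAbove (σ u))).support
      (∏ u, f u (l.succAbove (τ u))).support := by
  obtain ⟨u0, hu0⟩ : ∃ u, σ u ≠ τ u := by
    by_contra h
    push_neg at h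
    exact hστ (Equiv.ext h)
  set S : Finset (Fin N) := (fam u0).biUnion C with hS
  rw [Finset.disjoint_left]
  intro m h1 h2
  have hkey : ∀ π : Equiv.Perm (Fin n), m ∈ (∏ u, f u (l.succAbove (π u))).support →
      m.filter (· ∈ S) ∈ (f u0 (l.succAbove (π u0))).support := by
    intro π hm
    rw [← Finset.mul_prod_erase Finset.univ _ (Finset.mem_univ u0)] at hm
    refine filter_mem_support_of_mul _ _ S (hvars u0 _) ?_ hm
    refine Finset.disjoint_left.2 fun x hx hxS => ?_
    have hx' := MvPolynomial.vars_prod (s := Finset.univ.erase u0)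
      (f := fun u => f u (l.succAbove (π u))) hx
    rw [Finset.mem_biUnion] at hx'
    obtain ⟨v, hv, hxv⟩ := hx'
    have hvu : v ≠ u0 := (Finset.mem_erase.1 hv).1
    have hxv' := hvars v _ hxv
    rw [Finset.mem_biUnion] at hxv' hxS
    obtain ⟨i, hi, hxi⟩ := hxv'
    obtain ⟨j, hj, hxj⟩ := hxS
    have hij : i ≠ j := by
      rintro rfl
      exact Finset.disjoint_left.1 (hfam v u0 hvu) hi hj
    exact Finset.disjoint_left.1 (hC i j hij) hxi hxj
  have hd := hsupp u0 (l.succAbove (σ u0)) (l.succAbove (τ u0))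
    (fun h => hu0 (Fin.succAbove_right_injective h))
  exact Finset.disjoint_left.1 hd (hkey σ h1) (hkey τ h2)
end

section
/- Tropical Pappus intersection lemma: If k ≥ 1 projective lines L_i : l_i x + l_i' y + l_i'' z = 0 over the Puiseux series field, with all coefficients l_i, l_i', l_i'' nonzero, pass through a common point of the projective plane, then the tropicalizations T(L_1), …, T(L_k) ⊂ ℝ² have a common point. -/
/-- A tropical point `z` (in homogeneous coordinates) lies on the tropical line with
coefficient vector `w` iff the maximum of `w j + z j` is attained at least twice. -/
def OnTropLine (w z : Fin 3 → ℝ) : Prop :=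
  ∃ j j' : Fin 3, j ≠ j' ∧ w j + z j = w j' + z j' ∧ ∀ m, w m + z m ≤ w j + z j

open Filter Finset

theorem HahnSeries.exists_ne_order_eq_of_sum_eq_zero {Γ R ι : Type*} [Zero Γ] [LinearOrder Γ]
    [AddCommMonoid R] {s : Finset ι} {a : ι → HahnSeries Γ R} (ha : ∀ j ∈ s, a j ≠ 0)
    (hs : s.Nonempty) (hsum : ∑ j ∈ s, a j = 0) :
    ∃ j ∈ s, ∃ j' ∈ s, j ≠ j' ∧ (a j).order = (a j').order ∧
      ∀ m ∈ s, (a j).order ≤ (a m).order := by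
  obtain ⟨j, hj, hmin⟩ := s.exists_min_image (fun m => (a m).order) hs
  refine ⟨j, hj, ?_⟩
  suffices ∃ j' ∈ s, j ≠ j' ∧ (a j).order = (a j').order by
    obtain ⟨j', hj', hjj', heq⟩ := this
    exact ⟨j', hj', hjj', heq, hmin⟩
  by_contra! hne
  have hcoeff := congrArg (HahnSeries.coeff · (a j).order) hsum
  simp only [HahnSeries.coeff_sum, HahnSeries.coeff_zero] at hcoeff
  rw [sum_eq_single_of_mem j hj fun m hm hmj => HahnSeries.coeff_eq_zero_of_lt_order
    ((hmin m hm).lt_of_ne (hne m hm hmj.symm))] at hcoeff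
  exact HahnSeries.coeff_order_eq_zero.not.2 (ha j hj) hcoeff

theorem T_mul {x y : HahnSeries ℝ ℂ} (hx : x ≠ 0) (hy : y ≠ 0) : T (x * y) = T x + T y := by
  simp only [T, HahnSeries.order_mul hx hy]
  ring

open Classical in
/-- Coordinatewise `T`, with the tropical value `-∞` of a zero coordinate replaced by `c`. -/
noncomputable def tropApprox {ι : Type*} (p : ι → HahnSeries ℝ ℂ) (c : ℝ) (j : ι) : ℝ :=
  if p j = 0 then c else T (p j)

theorem eventually_onTropLine_tropApprox {l p : Fin 3 → HahnSeries ℝ ℂ} (hl : ∀ j, l j ≠ 0)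
    (hp : p ≠ 0) (hlp : ∑ j, l j * p j = 0) :
    ∀ᶠ c in atBot, OnTropLine (fun j => T (l j)) (tropApprox p c) := by
  classical
  set s := univ.filter fun j => p j ≠ 0
  have hs : s.Nonempty := by
    obtain ⟨j, hj⟩ := Function.ne_iff.1 hp
    exact ⟨j, mem_filter.2 ⟨mem_univ j, hj⟩⟩
  have hsum : ∑ j ∈ s, l j * p j = 0 := by
    rwa [sum_filter_of_ne fun j _ h => right_ne_zero_of_mul h]
  have hval : ∀ c, ∀ m ∈ s, T (l m) + tropApprox p c m = T (l m * p m) := fun c m hm => by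
    have hpm := (mem_filter.1 hm).2
    rw [tropApprox, if_neg hpm, T_mul (hl m) hpm]
  obtain ⟨j, hj, j', hj', hjj', heq, hmin⟩ := HahnSeries.exists_ne_order_eq_of_sum_eq_zero
    (fun m hm => mul_ne_zero (hl m) (mem_filter.1 hm).2) hs hsum
  obtain ⟨c₀, hc₀⟩ := (Set.finite_range fun m => T (l j * p j) - T (l m)).bddBelow
  filter_upwards [eventually_le_atBot c₀] with c hc
  refine ⟨j, j', hjj', by rw [hval c j hj, hval c j' hj', T, T, heq], fun m => ?_⟩
  rw [hval c j hj]
  by_cases hpm : p m = 0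
  · have hm := hc₀ ⟨m, rfl⟩
    rw [tropApprox, if_pos hpm]
    linarith
  · have hm : m ∈ s := mem_filter.2 ⟨mem_univ m, hpm⟩
    rw [hval c m hm, T, T, neg_le_neg_iff]
    exact hmin m hm

theorem tropical_pappus_lemma_general {k : ℕ}
    (l : Fin k → Fin 3 → HahnSeries ℝ ℂ)
    (hl : ∀ i j, l i j ≠ 0)
    (p : Fin 3 → HahnSeries ℝ ℂ) (hp : p ≠ 0)
    (hcommon : ∀ i, ∑ j, l i j * p j = 0) :
    ∃ z : Fin 3 → ℝ, ∀ i, OnTropLine (fun j => T (l i j)) z := by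
  obtain ⟨c, hc⟩ :=
    (eventually_all.2 fun i => eventually_onTropLine_tropApprox (hl i) hp (hcommon i)).exists
  exact ⟨tropApprox p c, hc⟩

theorem tropical_pappus_lemma {k : ℕ} (hk : 1 ≤ k)
    (l : Fin k → Fin 3 → HahnSeries ℝ ℂ)
    (hl : ∀ i j, l i j ≠ 0)
    (p : Fin 3 → HahnSeries ℝ ℂ) (hp : p ≠ 0)
    (hcommon : ∀ i, ∑ j, l i j * p j = 0) :
    ∃ z : Fin 3 → ℝ, ∀ i, OnTropLine (fun j => T (l i j)) z :=
  tropical_pappus_lemma_general l hl p hp hcommon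
end

section
/- If L is a projective line over the Puiseux series field with equation l x + l' y + l'' z = 0 where l, l', l'' are all nonzero, and P = [0 : a : b] with a, b ≠ 0 lies on L, then for every sufficiently large real number M there is a point Q ∈ L with all three coordinates nonzero whose tropicalization is [-M : T(a) : T(b)]; in particular T(L ∩ (K*)³) contains the ray {[t : T(a/b) : 0] : t ≤ -M₀} for some M₀. -/
/-!
Put `q₀ = t^M`. On the line, `q₁ = a - (l / l') t^M`, and once `M` exceeds
`ord a - ord (l / l')` the second term has larger order than `a`, so `q₁` has the same order
as `a`. Then `[q₀ : q₁ : b]` tropicalizes to `[-M : T a : T b]`.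
-/

namespace HahnSeries

variable {Γ R : Type*}

theorem order_eq_of_orderTop_eq [Zero Γ] [PartialOrder Γ] [Zero R] {x y : R⟦Γ⟧}
    (h : x.orderTop = y.orderTop) : x.order = y.order := by
  rcases eq_or_ne x 0 with rfl | hx
  · rw [orderTop_zero, eq_comm, orderTop_eq_top] at h
    simp [h]
  · have hy : y ≠ 0 := orderTop_ne_top.1 (h ▸ orderTop_ne_top.2 hx)
    exact_mod_cast (order_eq_orderTop_of_ne_zero hx).trans
      (h.trans (order_eq_orderTop_of_ne_zero hy).symm)

variable [AddCommMonoid Γ] [LinearOrder Γ] [IsOrderedCancelAddMonoid Γ]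
  [Ring R] [NoZeroDivisors R] [Nontrivial R]

theorem orderTop_lt_orderTop_mul_single {a c : R⟦Γ⟧} (ha : a ≠ 0) {M : Γ}
    (hM : a.order < c.order + M) : a.orderTop < (c * single M 1).orderTop := by
  rw [orderTop_mul, orderTop_single one_ne_zero]
  rcases eq_or_ne c 0 with rfl | hc
  · simpa using ha
  · rw [← order_eq_orderTop_of_ne_zero ha, ← order_eq_orderTop_of_ne_zero hc]
    exact_mod_cast hM

theorem orderTop_sub_mul_single {a c : R⟦Γ⟧} (ha : a ≠ 0) {M : Γ}
    (hM : a.order < c.order + M) : (a - c * single M 1).orderTop = a.orderTop :=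
  orderTop_sub (orderTop_lt_orderTop_mul_single ha hM)

end HahnSeries

open HahnSeries in
theorem ray_in_tropicalization_general
    (l l' l'' : HahnSeries ℝ ℂ) (hl' : l' ≠ 0)
    (a b : HahnSeries ℝ ℂ) (ha : a ≠ 0) (hb : b ≠ 0)
    (hP : l * 0 + l' * a + l'' * b = 0) :
    ∃ M₀ : ℝ, ∀ M : ℝ, M₀ < M →
      ∃ q : Fin 3 → HahnSeries ℝ ℂ,
        (∀ i, q i ≠ 0) ∧
        l * q 0 + l' * q 1 + l'' * q 2 = 0 ∧
        ∃ lam : ℝ, T (q 0) = -M + lam ∧ T (q 1) = T a + lam ∧ T (q 2) = T b + lam := by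
  obtain ⟨c, hc⟩ : ∃ c, l' * c = l := ⟨l / l', mul_div_cancel₀ l hl'⟩
  refine ⟨a.order - c.order, fun M hM => ?_⟩
  have hq₁ : (a - c * single M 1).orderTop = a.orderTop :=
    orderTop_sub_mul_single ha (by linarith)
  refine ⟨![single M 1, a - c * single M 1, b], ?_, ?_, 0, ?_, ?_, ?_⟩
  · intro i
    fin_cases i
    · exact single_ne_zero one_ne_zero
    · exact orderTop_ne_top.1 (hq₁ ▸ orderTop_ne_top.2 ha)
    · exact hb
  · change l * single M 1 + l' * (a - c * single M 1) + l'' * b = 0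
    linear_combination hP - single M 1 * hc
  · simp [T]
  · simp [T, order_eq_of_orderTop_eq hq₁]
  · simp [T]

theorem ray_in_tropicalization
    (l l' l'' : HahnSeries ℝ ℂ) (hl : l ≠ 0) (hl' : l' ≠ 0) (hl'' : l'' ≠ 0)
    (a b : HahnSeries ℝ ℂ) (ha : a ≠ 0) (hb : b ≠ 0)
    (hP : l * 0 + l' * a + l'' * b = 0) :
    ∃ M₀ : ℝ, ∀ M : ℝ, M₀ < M →
      ∃ q : Fin 3 → HahnSeries ℝ ℂ,
        (∀ i, q i ≠ 0) ∧
        l * q 0 + l' * q 1 + l'' * q 2 = 0 ∧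
        ∃ lam : ℝ, T (q 0) = -M + lam ∧ T (q 1) = T a + lam ∧ T (q 2) = T b + lam :=
  ray_in_tropicalization_general l l' l'' hl' a b ha hb hP
end

section
/- The tropical cross product x ⊗ y of two points x, y ∈ ℝ³/ℝ(1,1,1) defines a tropical line containing both points: for p = x ⊗ y with coordinates p₁ = max(x₂+y₃, x₃+y₂), p₂ = max(x₁+y₃, x₃+y₁), p₃ = max(x₁+y₂, x₂+y₁), the maximum of p₁+x₁, p₂+x₂, p₃+x₃ is attained at least twice, and likewise for y. -/
/-- The tropical cross product of two points of the tropical projective plane. -/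
noncomputable def tcross (x y : Fin 3 → ℝ) : Fin 3 → ℝ :=
  ![max (x 1 + y 2) (x 2 + y 1), max (x 0 + y 2) (x 2 + y 0),
    max (x 0 + y 1) (x 1 + y 0)]

lemma bound3 {w z : Fin 3 → ℝ} {M : ℝ} (g0 : w 0 + z 0 ≤ M) (g1 : w 1 + z 1 ≤ M)
    (g2 : w 2 + z 2 ≤ M) : ∀ m, w m + z m ≤ M := by
  intro m; fin_cases m <;> assumption

lemma trop_key (w z : Fin 3 → ℝ) (A B C : ℝ) (h0 : w 0 + z 0 = max A B)
    (h1 : w 1 + z 1 = max A C) (h2 : w 2 + z 2 = max B C) : OnTropLine w z := by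
  rcases le_total A B with hAB | hAB
  · rcases le_total B C with hBC | hBC
    · -- C largest
      have hAC : A ≤ C := hAB.trans hBC
      refine ⟨1, 2, by decide, by rw [h1, h2, max_eq_right hAC, max_eq_right hBC], ?_⟩
      rw [h1, max_eq_right hAC]
      exact bound3 (by rw [h0]; exact max_le hAC hBC)
        (le_of_eq (by rw [h1, max_eq_right hAC]))
        (le_of_eq (by rw [h2, max_eq_right hBC]))
    · -- B largest
      have hCB : C ≤ B := hBC
      refine ⟨0, 2, by decide, by rw [h0, h2, max_eq_right hAB, max_eq_left hCB], ?_⟩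
      rw [h0, max_eq_right hAB]
      exact bound3 (le_of_eq (by rw [h0, max_eq_right hAB]))
        (by rw [h1]; exact max_le hAB hCB)
        (le_of_eq (by rw [h2, max_eq_left hCB]))
  · rcases le_total A C with hAC | hAC
    · -- C largest
      have hBC : B ≤ C := hAB.trans hAC
      refine ⟨1, 2, by decide, by rw [h1, h2, max_eq_right hAC, max_eq_right hBC], ?_⟩
      rw [h1, max_eq_right hAC]
      exact bound3 (by rw [h0]; exact max_le hAC hBC)
        (le_of_eq (by rw [h1, max_eq_right hAC]))
        (le_of_eq (by rw [h2, max_eq_right hBC]))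
    · -- A largest
      refine ⟨0, 1, by decide, by rw [h0, h1, max_eq_left hAB, max_eq_left hAC], ?_⟩
      rw [h0, max_eq_left hAB]
      exact bound3 (le_of_eq (by rw [h0, max_eq_left hAB]))
        (le_of_eq (by rw [h1, max_eq_left hAC]))
        (by rw [h2]; exact max_le hAB hAC)

theorem tcross_on_line (x y : Fin 3 → ℝ) :
    OnTropLine (tcross x y) x ∧ OnTropLine (tcross x y) y := by
  constructor
  · apply trop_key (tcross x y) x (x 0 + x 1 + y 2) (x 0 + x 2 + y 1) (x 1 + x 2 + y 0) <;>
      · simp only [tcross, Matrix.cons_val_zero, Matrix.cons_val_one, Matrix.head_cons,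
          Matrix.cons_val_two, Matrix.tail_cons]
        rw [← max_add_add_right]
        congr 1 <;> ring
  · apply trop_key (tcross x y) y (x 2 + y 0 + y 1) (x 1 + y 0 + y 2) (x 0 + y 1 + y 2) <;>
      · simp only [tcross, Matrix.cons_val_zero, Matrix.cons_val_one, Matrix.head_cons,
          Matrix.cons_val_two, Matrix.tail_cons]
        rw [← max_add_add_right, max_comm]
        all_goals (congr 1 <;> ring)
end
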